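/- arXiv:1609.06036 — 5 statements merged into one kernel-verified Lean document; each statement's English description precedes it below -/
import Mathlib

section
/- Let Σ be a finite multigraph and Λ a divisor on Σ. If φ₁ and φ₂ both belong to the linear system L(Λ), then the pointwise minimum φ defined by φ(v) = min(φ₁(v), φ₂(v)) also belongs to L(Λ). -/
/-- The Laplacian of a function `φ : V → ℝ` on the multigraph with
edge-multiplicity function `m`: `Δ(φ)(v) = ∑_w m(v,w)·(φ(v) − φ(w))`. -/
noncomputable def lap {V : Type*} [Fintype V] (m : V → V → ℕ) (φ : V → ℝ) (v : V) : ℝ :=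
  ∑ w, (m v w : ℝ) * (φ v - φ w)

/-- The linear system `L(Λ)` of a divisor `Λ`: functions `φ` with `Δ(φ) + Λ ≥ 0`. -/
def Lsys {V : Type*} [Fintype V] (m : V → V → ℕ) (Λ : V → ℝ) : Set (V → ℝ) :=
  {φ | ∀ v, 0 ≤ lap m φ v + Λ v}

/-- If `φ₁, φ₂ ∈ L(Λ)`, then the pointwise minimum of `φ₁` and `φ₂` belongs to `L(Λ)`. -/
theorem min_mem_linear_system {V : Type*} [Fintype V] [Nonempty V]
    (m : V → V → ℕ) (hm : ∀ v w, m v w = m w v) (Λ : V → ℝ) (φ₁ φ₂ : V → ℝ)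
    (h₁ : φ₁ ∈ Lsys m Λ) (h₂ : φ₂ ∈ Lsys m Λ) :
    (fun v => min (φ₁ v) (φ₂ v)) ∈ Lsys m Λ := by
  intro v
  have key : ∀ (ψ : V → ℝ), ψ ∈ Lsys m Λ → min (φ₁ v) (φ₂ v) = ψ v →
      (∀ w, min (φ₁ w) (φ₂ w) ≤ ψ w) → 0 ≤ lap m (fun v => min (φ₁ v) (φ₂ v)) v + Λ v := by
    intro ψ hψ hv hle
    have hsum : lap m ψ v ≤ lap m (fun v => min (φ₁ v) (φ₂ v)) v := by
      apply Finset.sum_le_sum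
      intro w _
      apply mul_le_mul_of_nonneg_left _ (by positivity)
      simp only [hv]
      linarith [hle w]
    linarith [hψ v]
  rcases min_cases (φ₁ v) (φ₂ v) with ⟨hv, _⟩ | ⟨hv, _⟩
  · exact key φ₁ h₁ hv (fun w => min_le_left _ _)
  · exact key φ₂ h₂ hv (fun w => min_le_right _ _)
end

section
/- Let Σ be a finite multigraph. For every function φ : V → ℝ and every pair of adjacent vertices v', w' (i.e. v' ≠ w' and m(v',w') > 0), one has |φ(w') − φ(v')| ≤ M(Δ(φ)). -/
/-- `M(f) = max_{S ⊆ V} |∑_{v∈S} f(v)|`. -/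
noncomputable def Mmax {V : Type*} [Fintype V] (f : V → ℝ) : ℝ :=
  (Finset.univ : Finset V).powerset.sup'
    ⟨∅, Finset.empty_mem_powerset _⟩ (fun S => |∑ v ∈ S, f v|)

lemma sum_le_Mmax {V : Type*} [Fintype V] (f : V → ℝ) (S : Finset V) :
    ∑ v ∈ S, f v ≤ Mmax f := by
  refine le_trans (le_abs_self _) ?_
  exact Finset.le_sup' (fun S => |∑ v ∈ S, f v|)
    (Finset.mem_powerset.mpr (Finset.subset_univ S))

lemma Mmax_nonneg {V : Type*} [Fintype V] (f : V → ℝ) : 0 ≤ Mmax f := by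
  have := Finset.le_sup' (fun S => |∑ v ∈ S, f v|)
    (Finset.empty_mem_powerset (Finset.univ : Finset V))
  simpa [Mmax] using le_trans (abs_nonneg _) this

lemma key {V : Type*} [Fintype V] (m : V → V → ℕ) (hm : ∀ v w, m v w = m w v)
    (φ : V → ℝ) (v' w' : V) (hadj : 0 < m v' w') (hlt : φ w' < φ v') :
    φ v' - φ w' ≤ Mmax (lap m φ) := by
  classical
  set S : Finset V := Finset.univ.filter (fun u => φ w' < φ u) with hS
  have hv' : v' ∈ S := by simp [hS, hlt]
  have hw' : w' ∉ S := by simp [hS]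
  have hsplit : ∑ v ∈ S, lap m φ v
      = ∑ v ∈ S, ∑ w ∈ Sᶜ, (m v w : ℝ) * (φ v - φ w) := by
    have hzero : ∑ v ∈ S, ∑ w ∈ S, (m v w : ℝ) * (φ v - φ w) = 0 := by
      have h1 : ∑ v ∈ S, ∑ w ∈ S, (m v w : ℝ) * (φ v - φ w)
          = ∑ w ∈ S, ∑ v ∈ S, (m v w : ℝ) * (φ v - φ w) := Finset.sum_comm
      have h2 : ∑ w ∈ S, ∑ v ∈ S, (m v w : ℝ) * (φ v - φ w)
          = -∑ v ∈ S, ∑ w ∈ S, (m v w : ℝ) * (φ v - φ w) := by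
        rw [← Finset.sum_neg_distrib]
        refine Finset.sum_congr rfl fun w _ => ?_
        rw [← Finset.sum_neg_distrib]
        refine Finset.sum_congr rfl fun v _ => ?_
        rw [hm v w]; ring
      linarith [h1.trans h2]
    calc ∑ v ∈ S, lap m φ v
        = ∑ v ∈ S, (∑ w ∈ S, (m v w : ℝ) * (φ v - φ w)
            + ∑ w ∈ Sᶜ, (m v w : ℝ) * (φ v - φ w)) := by
          refine Finset.sum_congr rfl fun v _ => ?_
          rw [lap, Finset.sum_add_sum_compl]
      _ = ∑ v ∈ S, ∑ w ∈ Sᶜ, (m v w : ℝ) * (φ v - φ w) := by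
          rw [Finset.sum_add_distrib, hzero, zero_add]
  have hterm : ∀ v ∈ S, ∀ w ∈ Sᶜ, (0:ℝ) ≤ (m v w : ℝ) * (φ v - φ w) := by
    intro v hv w hw
    have h1 : φ w' < φ v := by simpa [hS] using hv
    have h2 : ¬ φ w' < φ w := by simpa [hS] using hw
    have : φ w ≤ φ v := le_of_lt (lt_of_le_of_lt (not_lt.mp h2) h1)
    exact mul_nonneg (Nat.cast_nonneg _) (sub_nonneg.mpr this)
  have hlb : φ v' - φ w' ≤ ∑ v ∈ S, ∑ w ∈ Sᶜ, (m v w : ℝ) * (φ v - φ w) := by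
    have hw'c : w' ∈ Sᶜ := Finset.mem_compl.mpr hw'
    have h1 : (m v' w' : ℝ) * (φ v' - φ w')
        ≤ ∑ w ∈ Sᶜ, (m v' w : ℝ) * (φ v' - φ w) :=
      Finset.single_le_sum (fun w hw => hterm v' hv' w hw) hw'c
    have h2 : ∑ w ∈ Sᶜ, (m v' w : ℝ) * (φ v' - φ w)
        ≤ ∑ v ∈ S, ∑ w ∈ Sᶜ, (m v w : ℝ) * (φ v - φ w) :=
      Finset.single_le_sum (fun v hv => Finset.sum_nonneg (hterm v hv)) hv'
    have hm1 : (1:ℝ) ≤ (m v' w' : ℝ) := by exact_mod_cast hadj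
    nlinarith [h1, h2, hlt]
  calc φ v' - φ w' ≤ ∑ v ∈ S, ∑ w ∈ Sᶜ, (m v w : ℝ) * (φ v - φ w) := hlb
    _ = ∑ v ∈ S, lap m φ v := hsplit.symm
    _ ≤ Mmax (lap m φ) := sum_le_Mmax _ _

/-- For any pair of adjacent vertices `v', w'` of the multigraph,
`|φ(w') − φ(v')| ≤ M(Δ(φ))`. -/
theorem abs_sub_le_Mmax_of_adj {V : Type*} [Fintype V] [Nonempty V]
    (m : V → V → ℕ) (hm : ∀ v w, m v w = m w v) (φ : V → ℝ)
    (v' w' : V) (hne : v' ≠ w') (hadj : 0 < m v' w') :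
    |φ w' - φ v'| ≤ Mmax (lap m φ) := by
  rcases lt_trichotomy (φ w') (φ v') with h | h | h
  · rw [abs_sub_comm, abs_of_pos (by linarith)]
    exact key m hm φ v' w' hadj h
  · rw [h, sub_self, abs_zero]; exact Mmax_nonneg _
  · rw [abs_of_pos (by linarith)]
    exact key m hm φ w' v' (by rw [hm]; exact hadj) h
end

section
/- Let Σ be a finite connected multigraph and d ≥ 0 a real number. Let φ, θ : V → ℝ be functions with φ(v) ≥ 0 and θ(v) ≥ 0 for all v, such that Δ(φ) − Δ(θ) = F − G for effective divisors F and G each of degree at most d, and suppose there exist (not necessarily distinct) vertices v, w with φ(v) = 0 and θ(w) = 0. Then max_{u∈V} |φ(u) − θ(u)| ≤ d · diam(Σ). -/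
/-- Key step: across any edge, the jump of `ψ` is at most `d`. -/
lemma lap_edge_step {V : Type*} [Fintype V]
    (m : V → V → ℕ) (hm : ∀ v w, m v w = m w v)
    (d : ℝ) (ψ : V → ℝ)
    (F G' : V → ℝ) (hF : ∀ v, 0 ≤ F v) (hG' : ∀ v, 0 ≤ G' v)
    (hFdeg : ∑ v, F v ≤ d)
    (hlap : ∀ u, lap m ψ u = F u - G' u)
    (x y : V) (hxy : 0 < m y x) (hlt : ψ x < ψ y) :
    ψ y - ψ x ≤ d := by
  classical
  set S : Finset V := Finset.univ.filter (fun z => ψ x < ψ z) with hS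
  have hyS : y ∈ S := by simp [hS, hlt]
  have hxS : x ∉ S := by simp [hS]
  -- internal cancellation
  have hzero : ∑ z ∈ S, ∑ u ∈ S, (m z u : ℝ) * (ψ z - ψ u) = 0 := by
    have h1 : ∑ z ∈ S, ∑ u ∈ S, (m z u : ℝ) * (ψ z - ψ u)
        = -∑ z ∈ S, ∑ u ∈ S, (m z u : ℝ) * (ψ z - ψ u) := by
      conv_lhs => rw [Finset.sum_comm]
      rw [← Finset.sum_neg_distrib]
      refine Finset.sum_congr rfl fun u _ => ?_
      rw [← Finset.sum_neg_distrib]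
      refine Finset.sum_congr rfl fun z _ => ?_
      rw [hm u z]; ring
    linarith
  have hsplit : ∑ z ∈ S, lap m ψ z
      = ∑ z ∈ S, ∑ u ∈ Sᶜ, (m z u : ℝ) * (ψ z - ψ u) := by
    have : ∀ z, lap m ψ z
        = ∑ u ∈ S, (m z u : ℝ) * (ψ z - ψ u) + ∑ u ∈ Sᶜ, (m z u : ℝ) * (ψ z - ψ u) := by
      intro z
      rw [lap, ← Finset.sum_add_sum_compl S]
    rw [Finset.sum_congr rfl fun z _ => this z, Finset.sum_add_distrib, hzero, zero_add]
  -- cut terms are nonnegative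
  have hterm : ∀ z ∈ S, ∀ u ∈ Sᶜ, (0:ℝ) ≤ (m z u : ℝ) * (ψ z - ψ u) := by
    intro z hz u hu
    have hz' : ψ x < ψ z := by simpa [hS] using hz
    have hu' : ψ u ≤ ψ x := by
      have := Finset.mem_compl.mp hu
      simpa [hS] using this
    have : 0 ≤ ψ z - ψ u := by linarith
    positivity
  -- single term lower bound
  have h1 : ψ y - ψ x ≤ (m y x : ℝ) * (ψ y - ψ x) := by
    have h1' : (1:ℝ) ≤ (m y x : ℝ) := by exact_mod_cast hxy
    nlinarith
  have h2 : (m y x : ℝ) * (ψ y - ψ x) ≤ ∑ u ∈ Sᶜ, (m y u : ℝ) * (ψ y - ψ u) := by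
    refine Finset.single_le_sum (fun u hu => hterm y hyS u hu) (Finset.mem_compl.mpr hxS)
  have h3 : ∑ u ∈ Sᶜ, (m y u : ℝ) * (ψ y - ψ u)
      ≤ ∑ z ∈ S, ∑ u ∈ Sᶜ, (m z u : ℝ) * (ψ z - ψ u) := by
    refine Finset.single_le_sum (fun z hz => Finset.sum_nonneg (hterm z hz)) hyS
  have h4 : ∑ z ∈ S, lap m ψ z ≤ d := by
    calc ∑ z ∈ S, lap m ψ z = ∑ z ∈ S, (F z - G' z) := by
          exact Finset.sum_congr rfl fun z _ => hlap z
      _ ≤ ∑ z ∈ S, F z := Finset.sum_le_sum fun z _ => by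
          have := hG' z; linarith
      _ ≤ ∑ z, F z := Finset.sum_le_sum_of_subset_of_nonneg (Finset.subset_univ S)
          (fun z _ _ => hF z)
      _ ≤ d := hFdeg
  rw [hsplit] at h4
  linarith

/-- Let the underlying simple graph `G` of the multigraph (adjacency: `v ≠ w` and
`m(v,w) > 0`) be connected, and let `d ≥ 0`. If `φ, θ : V → ℝ` are non-negative
functions with `Δ(φ) − Δ(θ) = F − G` for effective divisors `F, G` each of degree
at most `d`, and `φ(v) = 0`, `θ(w) = 0` for some vertices `v, w`, then
`max_u |φ(u) − θ(u)| ≤ d · diam(Σ)`. -/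
theorem abs_sub_le_of_lap_diff {V : Type*} [Fintype V] [Nonempty V]
    (m : V → V → ℕ) (hm : ∀ v w, m v w = m w v)
    (G : SimpleGraph V) (hG : ∀ v w, G.Adj v w ↔ v ≠ w ∧ 0 < m v w)
    (hconn : G.Connected)
    (d : ℝ) (hd : 0 ≤ d)
    (φ θ : V → ℝ) (hφ : ∀ v, 0 ≤ φ v) (hθ : ∀ v, 0 ≤ θ v)
    (F G' : V → ℝ) (hF : ∀ v, 0 ≤ F v) (hG' : ∀ v, 0 ≤ G' v)
    (hFdeg : ∑ v, F v ≤ d) (hG'deg : ∑ v, G' v ≤ d)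
    (hdiff : ∀ v, lap m φ v - lap m θ v = F v - G' v)
    (v w : V) (hv : φ v = 0) (hw : θ w = 0) :
    Finset.univ.sup' Finset.univ_nonempty (fun u => |φ u - θ u|) ≤ d * (G.diam : ℝ) := by
  classical
  set ψ : V → ℝ := fun u => φ u - θ u with hψ
  have hlap : ∀ u, lap m ψ u = F u - G' u := by
    intro u
    rw [← hdiff u]
    simp only [lap, hψ, ← Finset.sum_sub_distrib]
    exact Finset.sum_congr rfl fun z _ => by ring
  have hlap' : ∀ u, lap m (fun z => -ψ z) u = G' u - F u := by
    intro u
    have : lap m (fun z => -ψ z) u = -lap m ψ u := by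
      simp only [lap, ← Finset.sum_neg_distrib]
      exact Finset.sum_congr rfl fun z _ => by ring
    rw [this, hlap]; ring
  -- edge Lipschitz bound
  have hedge : ∀ x y : V, G.Adj x y → |ψ x - ψ y| ≤ d := by
    intro x y hxy
    have hmpos : 0 < m x y := ((hG x y).mp hxy).2
    have hmpos' : 0 < m y x := by rw [hm]; exact hmpos
    rcases lt_trichotomy (ψ x) (ψ y) with h | h | h
    · have h6 : ψ y ≤ ψ x + d := by
        simpa using lap_edge_step m hm d (fun z => -ψ z) G' F hG' hF hG'deg hlap' y x hmpos
          (by simpa using h)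
      rw [abs_sub_comm, abs_of_pos (by linarith)]
      linarith
    · simp [h, hd]
    · have h5 : ψ x - ψ y ≤ d := lap_edge_step m hm d ψ F G' hF hG' hFdeg hlap y x hmpos h
      rw [abs_of_pos (by linarith)]
      linarith
  -- Lipschitz along walks
  have hwalk : ∀ (x y : V) (p : G.Walk x y), |ψ x - ψ y| ≤ d * p.length := by
    intro x y p
    induction p with
    | nil => simp
    | @cons a b c h p ih =>
      calc |ψ a - ψ c| ≤ |ψ a - ψ b| + |ψ b - ψ c| := abs_sub_le _ _ _
        _ ≤ d + d * p.length := add_le_add (hedge a b h) ih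
        _ = d * ((p.cons h).length : ℝ) := by
            simp [SimpleGraph.Walk.length_cons]; ring
  have hediam : G.ediam ≠ ⊤ := by
    obtain ⟨a, b, hab⟩ := SimpleGraph.exists_edist_eq_ediam_of_finite (G := G)
    rw [← hab]
    exact SimpleGraph.edist_ne_top_iff_reachable.mpr (hconn a b)
  have hdist : ∀ x y : V, |ψ x - ψ y| ≤ d * (G.diam : ℝ) := by
    intro x y
    obtain ⟨p, hp⟩ := (hconn x y).exists_walk_length_eq_dist
    calc |ψ x - ψ y| ≤ d * p.length := hwalk x y p
      _ ≤ d * (G.diam : ℝ) := by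
          refine mul_le_mul_of_nonneg_left ?_ hd
          rw [hp]
          exact_mod_cast SimpleGraph.dist_le_diam hediam
  refine Finset.sup'_le _ _ fun u _ => ?_
  have h1 : ψ u ≤ d * (G.diam : ℝ) := by
    have := hdist u v
    have hψv : ψ v ≤ 0 := by simp [hψ, hv, hθ v]
    have := abs_le.mp this
    linarith [this.2]
  have h2 : -(d * (G.diam : ℝ)) ≤ ψ u := by
    have := hdist u w
    have hψw : 0 ≤ ψ w := by simp [hψ, hw, hφ w]
    have := abs_le.mp this
    linarith [this.1]
  exact abs_le.mpr ⟨h2, h1⟩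
end

section
/- Let Σ be a finite multigraph and Λ a divisor on Σ such that the effective linear system L⁺(Λ) is non-empty. Define ϖ : V → ℝ by ϖ(v) = inf { φ(v) : φ ∈ L⁺(Λ) }. Then ϖ itself belongs to L⁺(Λ); in particular each infimum is attained, and ϖ is the pointwise minimal element of L⁺(Λ). -/
/-- The effective linear system `L⁺(Λ)`: non-negative functions `φ` with `Δ(φ) + Λ ≥ 0`. -/
def LsysPlus {V : Type*} [Fintype V] (m : V → V → ℕ) (Λ : V → ℝ) : Set (V → ℝ) :=
  {φ | (∀ v, 0 ≤ lap m φ v + Λ v) ∧ ∀ v, 0 ≤ φ v}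

lemma lap_min_aux {V : Type*} [Fintype V] (m : V → V → ℕ) (φ ψ : V → ℝ) (v : V)
    (h : min (φ v) (ψ v) = φ v) :
    lap m φ v ≤ lap m (fun w => min (φ w) (ψ w)) v := by
  unfold lap
  apply Finset.sum_le_sum
  intro w _
  have h1 : min (φ w) (ψ w) ≤ φ w := min_le_left _ _
  have h2 : (0:ℝ) ≤ (m v w : ℝ) := Nat.cast_nonneg _
  have : φ v - φ w ≤ min (φ v) (ψ v) - min (φ w) (ψ w) := by rw [h]; linarith
  exact mul_le_mul_of_nonneg_left this h2

/-- `L⁺(Λ)` is closed under pointwise min. -/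
lemma min_mem_LsysPlus {V : Type*} [Fintype V] (m : V → V → ℕ) (Λ : V → ℝ)
    {φ ψ : V → ℝ} (hφ : φ ∈ LsysPlus m Λ) (hψ : ψ ∈ LsysPlus m Λ) :
    (fun w => min (φ w) (ψ w)) ∈ LsysPlus m Λ := by
  constructor
  · intro v
    rcases min_cases (φ v) (ψ v) with ⟨h, _⟩ | ⟨h, _⟩
    · have := lap_min_aux m φ ψ v h
      have := hφ.1 v; linarith
    · have hcomm : (fun w => min (φ w) (ψ w)) = fun w => min (ψ w) (φ w) :=
        funext fun w => min_comm _ _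
      rw [hcomm]
      have := lap_min_aux m ψ φ v (by rw [min_comm]; exact h)
      have := hψ.1 v; linarith
  · intro v; exact le_min (hφ.2 v) (hψ.2 v)

/-- If `L⁺(Λ)` is non-empty, then the pointwise infimum
`ϖ(v) = inf { φ(v) : φ ∈ L⁺(Λ) }` itself belongs to `L⁺(Λ)`; in particular each
infimum is attained and `ϖ` is the pointwise minimal element of `L⁺(Λ)`. -/
theorem minimal_element_mem_LsysPlus {V : Type*} [Fintype V] [Nonempty V]
    (m : V → V → ℕ) (hm : ∀ v w, m v w = m w v)
    (Λ : V → ℝ) (hne : (LsysPlus m Λ).Nonempty) :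
    (fun v => sInf {x : ℝ | ∃ φ ∈ LsysPlus m Λ, φ v = x}) ∈ LsysPlus m Λ ∧
      ∀ φ ∈ LsysPlus m Λ, ∀ v, sInf {x : ℝ | ∃ ψ ∈ LsysPlus m Λ, ψ v = x} ≤ φ v := by
  classical
  set S : V → Set ℝ := fun v => {x : ℝ | ∃ φ ∈ LsysPlus m Λ, φ v = x} with hS
  set ϖ : V → ℝ := fun v => sInf (S v) with hϖ
  have hSne : ∀ v, (S v).Nonempty := fun v => ⟨hne.choose v, hne.choose, hne.choose_spec, rfl⟩
  have hSbdd : ∀ v, BddBelow (S v) := by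
    intro v; exact ⟨0, by rintro x ⟨φ, hφ, rfl⟩; exact hφ.2 v⟩
  have hle : ∀ φ ∈ LsysPlus m Λ, ∀ v, ϖ v ≤ φ v := by
    intro φ hφ v; exact csInf_le (hSbdd v) ⟨φ, hφ, rfl⟩
  have hϖ0 : ∀ v, 0 ≤ ϖ v := by
    intro v; exact le_csInf (hSne v) (by rintro x ⟨φ, hφ, rfl⟩; exact hφ.2 v)
  -- ε-approximation uniformly over a finite set of vertices
  have happrox : ∀ ε : ℝ, 0 < ε → ∀ s : Finset V,
      ∃ φ ∈ LsysPlus m Λ, ∀ v ∈ s, φ v ≤ ϖ v + ε := by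
    intro ε hε s
    induction s using Finset.induction_on with
    | empty => exact ⟨hne.choose, hne.choose_spec, by simp⟩
    | @insert a s ha ih =>
      obtain ⟨φ, hφ, hφs⟩ := ih
      obtain ⟨x, ⟨χ, hχ, hχa⟩, hx⟩ := Real.lt_sInf_add_pos (hSne a) hε
      refine ⟨fun w => min (φ w) (χ w), min_mem_LsysPlus m Λ hφ hχ, ?_⟩
      intro v hv
      rcases Finset.mem_insert.mp hv with rfl | hv
      · calc min (φ v) (χ v) ≤ χ v := min_le_right _ _
          _ ≤ ϖ v + ε := by rw [hχa]; exact le_of_lt hx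
      · exact le_trans (min_le_left _ _) (hφs v hv)
  refine ⟨⟨?_, hϖ0⟩, hle⟩
  intro v
  set C : ℝ := ∑ w, (m v w : ℝ) with hC
  have hC0 : 0 ≤ C := Finset.sum_nonneg fun w _ => Nat.cast_nonneg _
  refine le_of_forall_pos_le_add ?_
  intro ε hε
  set δ : ℝ := ε / (C + 1) with hδ
  have hδ0 : 0 < δ := div_pos hε (by linarith)
  obtain ⟨φ, hφ, hφδ⟩ := happrox δ hδ0 Finset.univ
  have hterm : ∀ w, (m v w : ℝ) * (φ v - φ w) - δ * (m v w : ℝ)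
      ≤ (m v w : ℝ) * (ϖ v - ϖ w) := by
    intro w
    have h1 : φ v - δ ≤ ϖ v := by linarith [hφδ v (Finset.mem_univ v)]
    have h2 : ϖ w ≤ φ w := hle φ hφ w
    have h3 : (0:ℝ) ≤ (m v w : ℝ) := Nat.cast_nonneg _
    nlinarith [mul_nonneg h3 (sub_nonneg.mpr h1), mul_nonneg h3 (sub_nonneg.mpr h2)]
  have hsum : lap m φ v - δ * C ≤ lap m ϖ v := by
    have := Finset.sum_le_sum (fun w (_ : w ∈ Finset.univ) => hterm w)
    simpa [lap, Finset.sum_sub_distrib, Finset.mul_sum, hC] using this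
  have hδC : δ * C ≤ ε := by
    rw [hδ, div_mul_eq_mul_div, div_le_iff₀ (by linarith : (0:ℝ) < C + 1)]
    nlinarith
  have := hφ.1 v
  linarith
end

section
/- Let Σ be a finite multigraph and Λ a divisor on Σ such that the effective linear system L⁺(Λ) is non-empty, and let ϖ be the minimal element of L⁺(Λ), i.e. ϖ(v) = min { φ(v) : φ ∈ L⁺(Λ) } for each v ∈ V. Then the map φ ↦ φ + ϖ is a bijection from L⁺(Λ + Δ(ϖ)) onto L⁺(Λ). -/
lemma lap_add {V : Type*} [Fintype V] (m : V → V → ℕ) (φ ψ : V → ℝ) (v : V) :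
    lap m (φ + ψ) v = lap m φ v + lap m ψ v := by
  simp only [lap, Pi.add_apply, ← Finset.sum_add_distrib]
  apply Finset.sum_congr rfl
  intro w _
  ring

lemma lap_sub {V : Type*} [Fintype V] (m : V → V → ℕ) (φ ψ : V → ℝ) (v : V) :
    lap m (φ - ψ) v = lap m φ v - lap m ψ v := by
  simp only [lap, Pi.sub_apply, ← Finset.sum_sub_distrib]
  apply Finset.sum_congr rfl
  intro w _
  ring

/-- Let `L⁺(Λ)` be non-empty and let `ϖ` be its minimal element, i.e. for each `v`,
`ϖ(v)` is the least element of `{ φ(v) : φ ∈ L⁺(Λ) }`. Then the map `φ ↦ φ + ϖ` is a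
bijection from `L⁺(Λ + Δ(ϖ))` onto `L⁺(Λ)`. -/
theorem addMinimal_bijOn {V : Type*} [Fintype V] [Nonempty V]
    (m : V → V → ℕ) (hm : ∀ v w, m v w = m w v)
    (Λ : V → ℝ) (hne : (LsysPlus m Λ).Nonempty)
    (ϖ : V → ℝ) (hϖ : ∀ v, IsLeast {x : ℝ | ∃ φ ∈ LsysPlus m Λ, φ v = x} (ϖ v)) :
    Set.BijOn (fun φ => φ + ϖ)
      (LsysPlus m (fun v => Λ v + lap m ϖ v)) (LsysPlus m Λ) := by
  have hϖ0 : ∀ v, 0 ≤ ϖ v := by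
    intro v
    obtain ⟨φ, hφ, hφv⟩ := (hϖ v).1
    exact hφv ▸ hφ.2 v
  refine ⟨?_, ?_, ?_⟩
  · intro φ ⟨h1, h2⟩
    refine ⟨fun v => ?_, fun v => add_nonneg (h2 v) (hϖ0 v)⟩
    have h := h1 v
    dsimp only at h
    rw [lap_add]
    linarith
  · intro φ hφ ψ hψ h
    funext v
    have := congrFun h v
    simp only [Pi.add_apply] at this
    linarith
  · intro ψ ⟨h1, h2⟩
    refine ⟨ψ - ϖ, ⟨fun v => ?_, fun v => ?_⟩, by simp⟩
    · have h := h1 v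
      dsimp only
      rw [lap_sub]
      linarith
    · have : ϖ v ≤ ψ v := (hϖ v).2 ⟨ψ, ⟨h1, h2⟩, rfl⟩
      simp [this]
end
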